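/- arXiv:1905.05457 — 5 statements merged into one kernel-verified Lean document; each statement's English description precedes it below -/
import Mathlib

section
/- Let F : Y → Y be a map with a countable Markov partition {Y_i} such that on each n-cylinder there is uniform expansion d(F^n x, F^n y) ≥ C_e σ^n d(x,y) with σ > 1, and let Φ be a potential with |e^{S_nΦ(x) - S_nΦ(y)} - 1| ≤ C_d d(F^n x, F^n y)^η on n-cylinders, and let m be a Φ-conformal measure with images F^n(Y_i^{(n)}) of measure at least q > 0. Then for every n and every point x of an n-cylinder Y_i^{(n)}, e^{S_nΦ(x)} ≤ ((1+C_d)/q) m(Y_i^{(n)}). -/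
/-!
The distortion hypothesis on the cylinder `Z`, together with `dist (F^[n] x) (F^[n] y) ≤ 1`,
gives `e^{S_nΦ x - S_nΦ y} ≤ 1 + C_d`, i.e. the density `e^{-S_nΦ}` of the conformal measure is
at most `(1 + C_d) e^{-S_nΦ x}` on `Z`. Integrating over `Z`,
`q ≤ m(F^n Z) = ∫_Z e^{-S_nΦ} dm ≤ (1 + C_d) e^{-S_nΦ x} m(Z)`, which rearranges to the claim.
-/

open MeasureTheory

lemma le_one_add_of_abs_sub_one_le_mul_rpow {t C d η : ℝ} (h : |t - 1| ≤ C * d ^ η)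
    (hC : 0 ≤ C) (hd₀ : 0 ≤ d) (hd₁ : d ≤ 1) (hη : 0 ≤ η) : t ≤ 1 + C := by
  have : C * d ^ η ≤ C := mul_le_of_le_one_right hC (Real.rpow_le_one hd₀ hd₁ hη)
  linarith [(abs_le.mp h).2]

lemma le_mul_measureReal_of_le_setIntegral {α : Type*} [MeasurableSpace α] {μ : Measure α}
    [IsFiniteMeasure μ] {s : Set α} (hs : MeasurableSet s) {f : α → ℝ} {q K : ℝ} (hq : 0 < q)
    (hqf : q ≤ ∫ x in s, f x ∂μ) (hfK : ∀ x ∈ s, f x ≤ K) : q ≤ K * μ.real s :=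
  have hf : IntegrableOn f s μ := .of_integral_ne_zero (hq.trans_le hqf).ne'
  calc q ≤ ∫ x in s, f x ∂μ := hqf
    _ ≤ ∫ _ in s, K ∂μ := setIntegral_mono_on hf (integrableOn_const (measure_ne_top μ s)) hs hfK
    _ = K * μ.real s := by rw [setIntegral_const, smul_eq_mul, mul_comm]

theorem conformal_cylinder_bound_general {Y : Type*} [MetricSpace Y] [MeasurableSpace Y]
    (F : Y → Y) (Φ : Y → ℝ) (m : Measure Y) [IsFiniteMeasure m]
    (n : ℕ) (Z : Set Y) (hZ : MeasurableSet Z)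
    (η Cd q : ℝ)
    (hη0 : 0 < η) (hCd : 0 ≤ Cd) (hq : 0 < q)
    (hdist : ∀ x ∈ Z, ∀ y ∈ Z,
      |Real.exp ((∑ i ∈ Finset.range n, Φ (F^[i] x)) -
          (∑ i ∈ Finset.range n, Φ (F^[i] y))) - 1| ≤
        Cd * dist (F^[n] x) (F^[n] y) ^ η)
    (hdiam : ∀ x ∈ Z, ∀ y ∈ Z, dist (F^[n] x) (F^[n] y) ≤ 1)
    (hconf : (m (F^[n] '' Z)).toReal =
      ∫ x in Z, Real.exp (-(∑ i ∈ Finset.range n, Φ (F^[i] x))) ∂m)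
    (himg : q ≤ (m (F^[n] '' Z)).toReal) :
    ∀ x ∈ Z, Real.exp (∑ i ∈ Finset.range n, Φ (F^[i] x)) ≤ (1 + Cd) / q * (m Z).toReal := by
  intro x hx
  set S : Y → ℝ := fun y ↦ ∑ i ∈ Finset.range n, Φ (F^[i] y)
  have hdensity : ∀ y ∈ Z, Real.exp (-S y) ≤ (1 + Cd) * Real.exp (-S x) := fun y hy ↦
    calc Real.exp (-S y) = Real.exp (S x - S y) * Real.exp (-S x) := by
          rw [← Real.exp_add]; ring_nf
      _ ≤ (1 + Cd) * Real.exp (-S x) := by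
          gcongr
          exact le_one_add_of_abs_sub_one_le_mul_rpow (hdist x hx y hy) hCd dist_nonneg
            (hdiam x hx y hy) hη0.le
  have hmass : q ≤ (1 + Cd) * Real.exp (-S x) * m.real Z :=
    le_mul_measureReal_of_le_setIntegral hZ hq (himg.trans_eq hconf) hdensity
  rw [div_mul_eq_mul_div, le_div_iff₀ hq]
  calc Real.exp (S x) * q ≤ Real.exp (S x) * ((1 + Cd) * Real.exp (-S x) * m.real Z) := by
        gcongr
    _ = (1 + Cd) * m.real Z := by
        rw [Real.exp_neg]; field_simp

theorem conformal_cylinder_bound {Y : Type*} [MetricSpace Y] [MeasurableSpace Y]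
    (F : Y → Y) (Φ : Y → ℝ) (m : Measure Y) [IsFiniteMeasure m]
    (n : ℕ) (Z : Set Y) (hZ : MeasurableSet Z)
    (η Ce Cd σ q : ℝ)
    (hη0 : 0 < η) (hη1 : η ≤ 1) (hCe : 0 < Ce) (hσ : 1 < σ) (hCd : 0 ≤ Cd) (hq : 0 < q)
    (hexp : ∀ x ∈ Z, ∀ y ∈ Z, Ce * σ ^ n * dist x y ≤ dist (F^[n] x) (F^[n] y))
    (hdist : ∀ x ∈ Z, ∀ y ∈ Z,
      |Real.exp ((∑ i ∈ Finset.range n, Φ (F^[i] x)) -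
          (∑ i ∈ Finset.range n, Φ (F^[i] y))) - 1| ≤
        Cd * dist (F^[n] x) (F^[n] y) ^ η)
    (hdiam : ∀ x ∈ Z, ∀ y ∈ Z, dist (F^[n] x) (F^[n] y) ≤ 1)
    (hconf : (m (F^[n] '' Z)).toReal =
      ∫ x in Z, Real.exp (-(∑ i ∈ Finset.range n, Φ (F^[i] x))) ∂m)
    (himg : q ≤ (m (F^[n] '' Z)).toReal) :
    ∀ x ∈ Z, Real.exp (∑ i ∈ Finset.range n, Φ (F^[i] x)) ≤ (1 + Cd) / q * (m Z).toReal :=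
  conformal_cylinder_bound_general F Φ m n Z hZ η Cd q hη0 hCd hq hdist hdiam hconf himg
end

section
/- Let (f, X, μ) be an ergodic measure-preserving system, and for ε > 0 let H_ε = (z-ε, z+ε) with μ(H_ε) > 0 for all ε > 0. Define the survivor set S_ε = ∩_{n≥0} f^{-n}(X \ H_ε). If f is continuous and S_ε ∩ ∂H_ε = ∅ for some ε, then there exists δ > 0 such that S_{ε'} = S_ε for all ε' ∈ (ε-δ, ε+δ). -/
open MeasureTheory

def survivorSet (f : ℝ → ℝ) (X : Set ℝ) (z ε : ℝ) : Set ℝ :=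
  {x ∈ X | ∀ n : ℕ, f^[n] x ∉ Set.Ioo (z - ε) (z + ε)}

/-!
Write `S ε` for the survivor set. It is closed, forward invariant and antitone in `ε`, and
`⋂ δ > 0, S (ε - δ) ∩ closedBall z (ε + δ) = S ε ∩ sphere z ε`, which is empty by hypothesis.
By compactness of `X` one member `S (ε - δ) ∩ closedBall z (ε + δ)` of this directed family is
already empty. Then every orbit starting in `S (ε - δ)` stays in `S (ε - δ)`, hence outside
`closedBall z (ε + δ)`, so `S (ε - δ) ⊆ S (ε + δ)` and `S` is constant on `[ε - δ, ε + δ]`.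
-/

open Metric Set

namespace survivorSet

variable {f : ℝ → ℝ} {X : Set ℝ} {z : ℝ}

theorem eq_setOf_dist (ε : ℝ) :
    survivorSet f X z ε = {x ∈ X | ∀ n : ℕ, ε ≤ dist (f^[n] x) z} := by
  simp only [survivorSet, ← Real.ball_eq_Ioo, mem_ball, not_lt]

theorem antitone : Antitone (survivorSet f X z) := fun _ _ hε _ hx =>
  ⟨hx.1, fun n hn => hx.2 n (Ioo_subset_Ioo (by linarith) (by linarith) hn)⟩

theorem mapsTo (hmaps : MapsTo f X X) (ε : ℝ) :
    MapsTo f (survivorSet f X z ε) (survivorSet f X z ε) := fun x hx =>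
  ⟨hmaps hx.1, fun n => by simpa only [← Function.iterate_succ_apply] using hx.2 (n + 1)⟩

theorem isClosed (hX : IsClosed X) (hf : ContinuousOn f X) (hmaps : MapsTo f X X) (ε : ℝ) :
    IsClosed (survivorSet f X z ε) := by
  have hiInter : survivorSet f X z ε = ⋂ n : ℕ, X ∩ f^[n] ⁻¹' (ball z ε)ᶜ := by
    ext x
    simp [survivorSet, Real.ball_eq_Ioo, forall_and]
  rw [hiInter]
  exact isClosed_iInter fun n =>
    (hf.iterate hmaps n).preimage_isClosed_of_isClosed hX isOpen_ball.isClosed_compl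

theorem subset_of_inter_closedBall_eq_empty (hmaps : MapsTo f X X) {ε₁ ε₂ : ℝ}
    (h : survivorSet f X z ε₁ ∩ closedBall z ε₂ = ∅) :
    survivorSet f X z ε₁ ⊆ survivorSet f X z ε₂ := by
  intro x hx
  rw [eq_setOf_dist]
  refine ⟨hx.1, fun n => ?_⟩
  have hxn : f^[n] x ∈ survivorSet f X z ε₁ := (mapsTo hmaps ε₁).iterate n hx
  have hfar : f^[n] x ∉ closedBall z ε₂ := fun hmem => h.subset ⟨hxn, hmem⟩
  exact (not_le.mp hfar).le

theorem iInter_sub_inter_closedBall_add (ε : ℝ) :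
    ⋂ δ : Ioi (0 : ℝ), survivorSet f X z (ε - δ) ∩ closedBall z (ε + δ) =
      survivorSet f X z ε ∩ sphere z ε := by
  ext x
  simp only [mem_iInter, mem_inter_iff, eq_setOf_dist, mem_ofPred_eq, mem_closedBall,
    mem_sphere, Subtype.forall, mem_Ioi]
  constructor
  · intro h
    have hε : ∀ n : ℕ, ε ≤ dist (f^[n] x) z := fun n =>
      le_of_forall_sub_le fun δ hδ => (h δ hδ).1.2 n
    refine ⟨⟨(h 1 one_pos).1.1, hε⟩, le_antisymm ?_ (hε 0)⟩
    exact le_of_forall_pos_le_add fun δ hδ => (h δ hδ).2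
  · rintro ⟨⟨hxX, hε⟩, hdist⟩ δ hδ
    exact ⟨⟨hxX, fun n => by linarith [hε n]⟩, by linarith⟩

theorem exists_inter_closedBall_eq_empty (hX : IsCompact X) (hf : ContinuousOn f X)
    (hmaps : MapsTo f X X) {ε : ℝ} (h : survivorSet f X z ε ∩ sphere z ε = ∅) :
    ∃ δ > 0, survivorSet f X z (ε - δ) ∩ closedBall z (ε + δ) = ∅ := by
  obtain ⟨⟨δ, hδ⟩, hempty⟩ := hX.elim_directed_family_closed
    (fun δ : Ioi (0 : ℝ) => survivorSet f X z (ε - δ) ∩ closedBall z (ε + δ))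
    (fun δ => (isClosed hX.isClosed hf hmaps _).inter isClosed_closedBall)
    (by rw [iInter_sub_inter_closedBall_add, h, inter_empty])
    (Monotone.directed_ge fun δ δ' (hδ : (δ : ℝ) ≤ δ') => inter_subset_inter
      (antitone (sub_le_sub_left hδ ε)) (closedBall_subset_closedBall (add_le_add_right hδ ε)))
  have hsub : survivorSet f X z (ε - δ) ⊆ X := fun _ hx => hx.1
  refine ⟨δ, hδ, ?_⟩
  rwa [← inter_assoc, inter_eq_right.mpr hsub] at hempty

end survivorSet

theorem Real.sphere_subset_pair (z ε : ℝ) : sphere z ε ⊆ {z - ε, z + ε} := by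
  rcases lt_or_ge ε 0 with hε | hε
  · simp [sphere_eq_empty_of_neg hε]
  · exact (Real.sphere_eq_pair z hε).subset

theorem survivor_locally_constant_general (a b : ℝ) (f : ℝ → ℝ)
    (hf : Continuous f) (hmaps : Set.MapsTo f (Set.Icc a b) (Set.Icc a b))
    (z : ℝ)
    (ε : ℝ)
    (hbd : survivorSet f (Set.Icc a b) z ε ∩ {z - ε, z + ε} = ∅) :
    ∃ δ > 0, ∀ ε', ε - δ < ε' → ε' < ε + δ →
      survivorSet f (Set.Icc a b) z ε' = survivorSet f (Set.Icc a b) z ε := by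
  have hsphere : survivorSet f (Icc a b) z ε ∩ sphere z ε = ∅ :=
    subset_eq_empty (inter_subset_inter_right _ (Real.sphere_subset_pair z ε)) hbd
  obtain ⟨δ, hδ, hempty⟩ := survivorSet.exists_inter_closedBall_eq_empty isCompact_Icc
    hf.continuousOn hmaps hsphere
  have hconst := survivorSet.subset_of_inter_closedBall_eq_empty hmaps hempty
  have heq : ∀ ε', ε - δ ≤ ε' → ε' ≤ ε + δ →
      survivorSet f (Icc a b) z ε' = survivorSet f (Icc a b) z (ε - δ) := fun ε' h₁ h₂ =>
    (survivorSet.antitone h₁).antisymm (hconst.trans (survivorSet.antitone h₂))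
  refine ⟨δ, hδ, fun ε' h₁ h₂ => ?_⟩
  rw [heq ε' h₁.le h₂.le, heq ε (by linarith) (by linarith)]

theorem survivor_locally_constant (a b : ℝ) (hab : a ≤ b) (f : ℝ → ℝ)
    (hf : Continuous f) (hmaps : Set.MapsTo f (Set.Icc a b) (Set.Icc a b))
    (μ : Measure ℝ) [IsProbabilityMeasure μ] (herg : Ergodic f μ)
    (z : ℝ) (hz : z ∈ Set.Icc a b)
    (hμH : ∀ ε > 0, 0 < μ (Set.Ioo (z - ε) (z + ε)))
    (ε : ℝ) (hε : 0 < ε)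
    (hbd : survivorSet f (Set.Icc a b) z ε ∩ {z - ε, z + ε} = ∅) :
    ∃ δ > 0, ∀ ε', ε - δ < ε' → ε' < ε + δ →
      survivorSet f (Set.Icc a b) z ε' = survivorSet f (Set.Icc a b) z ε :=
  survivor_locally_constant_general a b f hf hmaps z ε hbd
end

section
/- Let λ_ε ∈ (0,1) be the eigenvalue of a punctured transfer operator, Λ_ε the eigenvalue of the induced punctured operator, ν̂_ε an invariant probability measure for the induced open map that is an equilibrium state with pressure relation log Λ_ε = (∫ R_ε dν̂_ε) log λ_ε. If ∫ R_ε dν̂_ε ∈ [1, M] for all small ε and (1-Λ_ε)/μ̂_{Y,ε}(Ĥ'_ε) → 1, ∫R_ε dμ̂_{Y,ε} / ∫R_ε dν̂_ε → 1, and μ̂_ε(Ĥ'_ε)/μ̂_ε(Ĥ_ε) → c as ε → 0, then -log λ_ε / μ̂_ε(Ĥ_ε) → c. -/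
/-! Pass to the induced system: by the pressure relation `log Λ_ε = (∫ R_ε dν̂_ε) log λ_ε` and
Kac's lemma `μ̂_ε(Ĥ'_ε) = μ̂_{Y,ε}(Ĥ'_ε) / ∫ R_ε dμ̂_{Y,ε}`, the escape rate ratio
`-log λ_ε / μ̂_ε(Ĥ_ε)` is, exactly, the product of `-log Λ_ε / (1 - Λ_ε)`, of
`(1 - Λ_ε) / μ̂_{Y,ε}(Ĥ'_ε)`, of `∫ R_ε dμ̂_{Y,ε} / ∫ R_ε dν̂_ε` and of `μ̂_ε(Ĥ'_ε) / μ̂_ε(Ĥ_ε)`.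
The first factor tends to `1` because `log` has slope `1` at `1`, and the other three have the
assumed limits. -/

open Filter Topology

namespace Real

theorem tendsto_log_div_sub_one_nhdsNE_one :
    Tendsto (fun x : ℝ => log x / (x - 1)) (𝓝[≠] 1) (𝓝 1) := by
  have h := (hasDerivAt_iff_tendsto_slope.1 (hasDerivAt_log one_ne_zero)).congr
    fun x => by rw [slope_def_field, log_one, sub_zero]
  simpa using h

theorem tendsto_neg_log_div_one_sub {α : Type*} {l : Filter α} {f : α → ℝ}
    (hf : Tendsto f l (𝓝[≠] 1)) :
    Tendsto (fun a => -log (f a) / (1 - f a)) l (𝓝 1) :=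
  (tendsto_log_div_sub_one_nhdsNE_one.comp hf).congr fun a => by
    rw [Function.comp_apply, ← neg_sub, div_neg, neg_div]

end Real

open Real in
theorem neg_log_div_eq_escape_factors {lam Lam Rν Rμ mH mH' mYH' : ℝ}
    (hLam : log Lam ≠ 0) (hpressure : log Lam = Rν * log lam) (hkac : mH' = mYH' / Rμ)
    (hmYH' : mYH' ≠ 0) (hRμ : Rμ ≠ 0) :
    -log lam / mH =
      -log Lam / (1 - Lam) * ((1 - Lam) / mYH') * (Rμ / Rν) * (mH' / mH) := by
  have hRν : Rν ≠ 0 := by rintro rfl; exact hLam (by rw [hpressure, zero_mul])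
  have hLam1 : 1 - Lam ≠ 0 := by rw [sub_ne_zero]; rintro rfl; exact hLam log_one
  rw [hpressure, hkac]
  field_simp

theorem escape_rate_factorization_general
    (lam Lam Rν Rμ mH mH' mYH' : ℝ → ℝ) (c : ℝ)
    (h2 : ∀ ε > 0, 0 < Lam ε ∧ Lam ε < 1)
    (h3 : ∀ ε > 0, Real.log (Lam ε) = Rν ε * Real.log (lam ε))
    (h4 : ∀ ε > 0, mH' ε = mYH' ε / Rμ ε)
    (hpos : ∀ ε > 0, 0 < mH ε ∧ 0 < mYH' ε ∧ 0 < Rμ ε)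
    (hLam1 : Tendsto Lam (𝓝[>] (0:ℝ)) (𝓝 1))
    (hA : Tendsto (fun ε => (1 - Lam ε) / mYH' ε) (𝓝[>] (0:ℝ)) (𝓝 1))
    (hB : Tendsto (fun ε => Rμ ε / Rν ε) (𝓝[>] (0:ℝ)) (𝓝 1))
    (hC : Tendsto (fun ε => mH' ε / mH ε) (𝓝[>] (0:ℝ)) (𝓝 c)) :
    Tendsto (fun ε => -Real.log (lam ε) / mH ε) (𝓝[>] (0:ℝ)) (𝓝 c) := by
  have hLam : Tendsto Lam (𝓝[>] (0:ℝ)) (𝓝[≠] 1) :=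
    tendsto_nhdsWithin_iff.2 ⟨hLam1, eventually_nhdsWithin_of_forall fun ε hε =>
      (h2 ε hε).2.ne⟩
  have hprod := (((Real.tendsto_neg_log_div_one_sub hLam).mul hA).mul hB).mul hC
  rw [one_mul, one_mul, one_mul] at hprod
  refine hprod.congr' (eventually_nhdsWithin_of_forall fun ε hε => ?_)
  obtain ⟨hLam0, hLamlt⟩ := h2 ε hε
  obtain ⟨-, hmYH', hRμ⟩ := hpos ε hε
  exact (neg_log_div_eq_escape_factors (Real.log_neg hLam0 hLamlt).ne (h3 ε hε) (h4 ε hε)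
    hmYH'.ne' hRμ.ne').symm

theorem escape_rate_factorization
    (lam Lam Rν Rμ mH mH' mYH' : ℝ → ℝ) (c M : ℝ)
    (h1 : ∀ ε > 0, 0 < lam ε ∧ lam ε < 1)
    (h2 : ∀ ε > 0, 0 < Lam ε ∧ Lam ε < 1)
    (h3 : ∀ ε > 0, Real.log (Lam ε) = Rν ε * Real.log (lam ε))
    (h4 : ∀ ε > 0, mH' ε = mYH' ε / Rμ ε)
    (h5 : ∀ ε > 0, 1 ≤ Rν ε ∧ Rν ε ≤ M)
    (hpos : ∀ ε > 0, 0 < mH ε ∧ 0 < mYH' ε ∧ 0 < Rμ ε)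
    (hLam1 : Tendsto Lam (𝓝[>] (0:ℝ)) (𝓝 1))
    (hA : Tendsto (fun ε => (1 - Lam ε) / mYH' ε) (𝓝[>] (0:ℝ)) (𝓝 1))
    (hB : Tendsto (fun ε => Rμ ε / Rν ε) (𝓝[>] (0:ℝ)) (𝓝 1))
    (hC : Tendsto (fun ε => mH' ε / mH ε) (𝓝[>] (0:ℝ)) (𝓝 c)) :
    Tendsto (fun ε => -Real.log (lam ε) / mH ε) (𝓝[>] (0:ℝ)) (𝓝 c) :=
  escape_rate_factorization_general lam Lam Rν Rμ mH mH' mYH' c h2 h3 h4 hpos hLam1 hA hB hC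
end

section
/- Let f : I → I be locally eventually onto (for every open U ⊂ I there is n with f^n(U) = I), let π : Î → I be a semiconjugacy (π ∘ f̂ = f ∘ π) with the property that for any two open sets O_1, O_2 ⊂ Î with π(O_1) ∩ π(O_2) ≠ ∅ there is n with f̂^n(O_1) ∩ f̂^n(O_2) ≠ ∅. Then for any two open sets Q_1, Q_2 ⊂ Î there exist n_1, n_2 with f̂^{n_1+n_2}(Q_1) ∩ f̂^{n_2}(Q_2) ≠ ∅. -/
open Function Set

theorem IsOpenMap.iterate {X : Type*} [TopologicalSpace X] {f : X → X} (hf : IsOpenMap f) :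
    ∀ n : ℕ, IsOpenMap f^[n]
  | 0 => IsOpenMap.id
  | n + 1 => (hf.iterate n).comp hf

theorem Function.Semiconj.exists_image_iterate_eq_univ {X X' : Type*} [TopologicalSpace X]
    [TopologicalSpace X'] {f : X → X} {fh : X' → X'} {π : X' → X}
    (hleo : ∀ U : Set X, IsOpen U → U.Nonempty → ∃ n : ℕ, f^[n] '' U = univ)
    (hsemi : Semiconj π fh f) (hπopen : IsOpenMap π) {Q : Set X'} (hQ : IsOpen Q)
    (hne : Q.Nonempty) : ∃ n : ℕ, π '' (fh^[n] '' Q) = univ := by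
  obtain ⟨n, hn⟩ := hleo (π '' Q) (hπopen Q hQ) (hne.image π)
  exact ⟨n, ((hsemi.iterate_right n).set_image Q).trans hn⟩

theorem hofbauer_transitivity {X X' : Type*} [TopologicalSpace X] [TopologicalSpace X']
    (f : X → X) (fh : X' → X') (π : X' → X)
    (hleo : ∀ U : Set X, IsOpen U → U.Nonempty → ∃ n : ℕ, f^[n] '' U = Set.univ)
    (hsemi : π ∘ fh = f ∘ π)
    (hπopen : IsOpenMap π) (hfhopen : IsOpenMap fh)
    (hfibre : ∀ O₁ O₂ : Set X', IsOpen O₁ → IsOpen O₂ →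
      (π '' O₁ ∩ π '' O₂).Nonempty → ∃ n : ℕ, (fh^[n] '' O₁ ∩ fh^[n] '' O₂).Nonempty) :
    ∀ Q₁ Q₂ : Set X', IsOpen Q₁ → IsOpen Q₂ → Q₁.Nonempty → Q₂.Nonempty →
      ∃ n₁ n₂ : ℕ, (fh^[n₁ + n₂] '' Q₁ ∩ fh^[n₂] '' Q₂).Nonempty := by
  intro Q₁ Q₂ hQ₁ hQ₂ hne₁ ⟨y, hy⟩
  obtain ⟨n₁, hcover⟩ :=
    (semiconj_iff_comp_eq.mpr hsemi).exists_image_iterate_eq_univ hleo hπopen hQ₁ hne₁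
  have hmeet : (π '' (fh^[n₁] '' Q₁) ∩ π '' Q₂).Nonempty :=
    ⟨π y, hcover ▸ mem_univ _, mem_image_of_mem π hy⟩
  obtain ⟨n₂, hn₂⟩ := hfibre _ _ (hfhopen.iterate n₁ Q₁ hQ₁) hQ₂ hmeet
  refine ⟨n₁, n₂, ?_⟩
  rwa [Nat.add_comm, iterate_add, image_comp]
end

section
/- Let L be a transfer operator with conformal measure m, g ≥ 0 with Lg = g and m(g) = 1, and suppose there is an open set U with inf_U g > 0 and n ∈ ℕ with f^n(U) = I and inf{e^{S_nφ(y)} : y ∈ U} > 0. Then inf_I g > 0. -/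
theorem mul_exp_birkhoffSum_le_of_tsum_fiber_eq {X : Type*} {f : X → X} {φ g : X → ℝ}
    (hg0 : ∀ x, 0 ≤ g x) {n : ℕ} {x : X}
    (hsum : Summable fun y : {y : X // f^[n] y = x} => g y * Real.exp (birkhoffSum f φ n y))
    (hfix : g x = ∑' y : {y : X // f^[n] y = x}, g y * Real.exp (birkhoffSum f φ n y))
    {y : X} (hy : f^[n] y = x) :
    g y * Real.exp (birkhoffSum f φ n y) ≤ g x :=
  hfix ▸ hsum.le_tsum ⟨y, hy⟩ fun z _ => mul_nonneg (hg0 z) (Real.exp_pos _).le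

theorem density_bounded_below_general {X : Type*}
    (f : X → X) (φ : X → ℝ) (g : X → ℝ) (hg0 : ∀ x, 0 ≤ g x)
    (hsum : ∀ (n : ℕ) (x : X),
      Summable (fun y : {y : X // f^[n] y = x} =>
        g y * Real.exp (∑ i ∈ Finset.range n, φ (f^[i] (y : X)))))
    (hfix : ∀ (n : ℕ) (x : X),
      g x = ∑' y : {y : X // f^[n] y = x},
        g y * Real.exp (∑ i ∈ Finset.range n, φ (f^[i] (y : X))))
    (U : Set X)
    (hgU : ∃ c > 0, ∀ x ∈ U, c ≤ g x)
    (n : ℕ) (honto : f^[n] '' U = Set.univ)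
    (hφU : ∃ c' > 0, ∀ y ∈ U, c' ≤ Real.exp (∑ i ∈ Finset.range n, φ (f^[i] y))) :
    ∃ c > 0, ∀ x, c ≤ g x := by
  obtain ⟨c, hc, hcg⟩ := hgU
  obtain ⟨c', hc', hc'φ⟩ := hφU
  refine ⟨c * c', mul_pos hc hc', fun x => ?_⟩
  obtain ⟨y, hyU, hyx⟩ : x ∈ f^[n] '' U := honto ▸ Set.mem_univ x
  calc c * c' ≤ g y * Real.exp (birkhoffSum f φ n y) :=
        mul_le_mul (hcg y hyU) (hc'φ y hyU) hc'.le (hg0 y)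
    _ ≤ g x := mul_exp_birkhoffSum_le_of_tsum_fiber_eq hg0 (hsum n x) (hfix n x) hyx

theorem density_bounded_below {X : Type*} [TopologicalSpace X]
    (f : X → X) (φ : X → ℝ) (g : X → ℝ) (hg0 : ∀ x, 0 ≤ g x)
    (hsum : ∀ (n : ℕ) (x : X),
      Summable (fun y : {y : X // f^[n] y = x} =>
        g y * Real.exp (∑ i ∈ Finset.range n, φ (f^[i] (y : X)))))
    (hfix : ∀ (n : ℕ) (x : X),
      g x = ∑' y : {y : X // f^[n] y = x},
        g y * Real.exp (∑ i ∈ Finset.range n, φ (f^[i] (y : X))))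
    (U : Set X) (hU : IsOpen U)
    (hgU : ∃ c > 0, ∀ x ∈ U, c ≤ g x)
    (n : ℕ) (honto : f^[n] '' U = Set.univ)
    (hφU : ∃ c' > 0, ∀ y ∈ U, c' ≤ Real.exp (∑ i ∈ Finset.range n, φ (f^[i] y))) :
    ∃ c > 0, ∀ x, c ≤ g x :=
  density_bounded_below_general f φ g hg0 hsum hfix U hgU n honto hφU
end
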